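/- arXiv:1004.2437 — 2 statements merged into one kernel-verified Lean document; each statement's English description precedes it below -/
import Mathlib

section
/- ∫₀¹ log(x)/(x²-x+1) dx = 2π²/9 - (1/3)ψ'(1/3). -/
/-
For `0 < x < 1`,  `1 / (x² - x + 1) = (1 + x) / (1 + x³) = ∑ₙ (-1)ⁿ (x³ⁿ + x³ⁿ⁺¹)`, and
`∫₀¹ xᵏ log x dx = -1 / (k + 1)²`, so the integral is `-∑ₙ (-1)ⁿ (aₙ + bₙ)` with
`aₙ = 1 / (3n + 1)²` and `bₙ = 1 / (3n + 2)²`. Since `a₂ₖ₊₁ = bₖ / 4` and `b₂ₖ = aₖ / 4`, splitting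
into even and odd `n` turns the alternating sum into `(3/2) (∑ a - ∑ b)`, while summing `1 / n²` by
residue classes mod 3 gives `∑ a + ∑ b = (8/9) ζ(2) = 4π² / 27`. Finally `ψ'(1/3) = 9 ∑ a`.
-/

open Real MeasureTheory Set intervalIntegral

/-- The trigamma function `ψ'(x) = ∑_{k=0}^∞ 1/(x+k)²`. -/
noncomputable def trigamma (x : ℝ) : ℝ := ∑' k : ℕ, 1 / (x + k) ^ 2

lemma summable_one_div_sq_comp {i : ℕ → ℕ} (hi : i.Injective) :
    Summable fun n => 1 / (i n : ℝ) ^ 2 :=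
  hasSum_zeta_two.summable.comp_injective hi

lemma intervalIntegrable_pow_mul_log (k : ℕ) :
    IntervalIntegrable (fun x => x ^ k * log x) volume 0 1 :=
  intervalIntegrable_log'.continuousOn_mul (continuous_pow k).continuousOn

lemma hasDerivAt_pow_mul_log_primitive (k : ℕ) {x : ℝ} (hx : x ≠ 0) :
    HasDerivAt (fun x => x ^ (k + 1) * log x / (k + 1) - x ^ (k + 1) / (k + 1) ^ 2)
      (x ^ k * log x) x := by
  refine ((((hasDerivAt_pow (k + 1) x).mul (hasDerivAt_log hx)).div_const ((k : ℝ) + 1)).sub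
    ((hasDerivAt_pow (k + 1) x).div_const (((k : ℝ) + 1) ^ 2))).congr_deriv ?_
  rw [Nat.add_sub_cancel]
  push_cast
  field_simp
  ring

lemma integral_pow_mul_log (k : ℕ) : ∫ x in (0 : ℝ)..1, x ^ k * log x = -1 / (k + 1) ^ 2 := by
  have hcont : Continuous fun x : ℝ => x ^ (k + 1) * log x :=
    ((continuous_pow k).mul continuous_mul_log).congr fun x => by simp only [Pi.mul_apply]; ring
  rw [integral_eq_sub_of_hasDerivAt_of_le zero_le_one (by fun_prop)
    (fun x hx => hasDerivAt_pow_mul_log_primitive k hx.1.ne') (intervalIntegrable_pow_mul_log k)]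
  field_simp
  simp

lemma integral_norm_pow_mul_log (k : ℕ) :
    ∫ x in Ioc (0 : ℝ) 1, ‖x ^ k * log x‖ = 1 / (k + 1) ^ 2 := by
  have hnorm : EqOn (fun x => ‖x ^ k * log x‖) (fun x => -(x ^ k * log x)) (Ioc 0 1) :=
    fun x hx => by
      dsimp only
      rw [norm_of_nonpos (mul_nonpos_of_nonneg_of_nonpos (by positivity [hx.1.le])
        (log_nonpos hx.1.le hx.2))]
  rw [setIntegral_congr_fun measurableSet_Ioc hnorm, MeasureTheory.integral_neg,
    ← integral_of_le zero_le_one, integral_pow_mul_log]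
  ring

lemma hasSum_neg_one_pow_mul_pow {m : ℕ} (hm : m ≠ 0) (j : ℕ) {x : ℝ} (hx₀ : 0 ≤ x)
    (hx₁ : x < 1) : HasSum (fun n : ℕ => (-1) ^ n * x ^ (m * n + j)) (x ^ j / (1 + x ^ m)) := by
  have hr : |-x ^ m| < 1 := by
    rw [abs_neg, abs_of_nonneg (by positivity)]
    exact pow_lt_one₀ hx₀ hx₁ hm
  have h := (hasSum_geometric_of_abs_lt_one hr).mul_right (x ^ j)
  rw [sub_neg_eq_add, ← div_eq_inv_mul] at h
  exact h.congr_fun fun n => by rw [pow_add, pow_mul, neg_pow (x ^ m), mul_assoc]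

lemma intervalIntegrable_pow_mul_log_div_one_add_pow (m j : ℕ) :
    IntervalIntegrable (fun x => x ^ j * log x / (1 + x ^ m)) volume 0 1 := by
  refine (intervalIntegrable_pow_mul_log j).mul_continuousOn (g := fun x => (1 + x ^ m)⁻¹)
    (fun x hx => ?_)
  have : 0 ≤ x := by simpa using hx.1
  exact (continuousAt_inv₀ (by positivity)).comp (by fun_prop) |>.continuousWithinAt

lemma integral_pow_mul_log_div_one_add_pow {m : ℕ} (hm : m ≠ 0) (j : ℕ) :
    ∫ x in (0 : ℝ)..1, x ^ j * log x / (1 + x ^ m) =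
      -∑' n : ℕ, (-1) ^ n / ((m * n + j + 1 : ℕ) : ℝ) ^ 2 := by
  set F : ℕ → ℝ → ℝ := fun n x => (-1) ^ n * (x ^ (m * n + j) * log x)
  have hF_int (n : ℕ) : Integrable (F n) (volume.restrict (Ioc 0 1)) :=
    ((intervalIntegrable_iff_integrableOn_Ioc_of_le zero_le_one).1
      (intervalIntegrable_pow_mul_log _)).const_mul _
  have hF_norm (n : ℕ) : ∫ x in Ioc (0 : ℝ) 1, ‖F n x‖ = 1 / ((m * n + j + 1 : ℕ) : ℝ) ^ 2 := by
    have h (x : ℝ) : ‖F n x‖ = ‖x ^ (m * n + j) * log x‖ := by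
      rw [norm_mul, norm_pow, norm_neg, norm_one, one_pow, one_mul]
    simp only [h, integral_norm_pow_mul_log]
    push_cast
    rfl
  have hF_sum : Summable fun n => ∫ x in Ioc (0 : ℝ) 1, ‖F n x‖ := by
    simp only [hF_norm]
    exact summable_one_div_sq_comp fun a b hab => by simpa [hm] using hab
  have hF_tsum : EqOn (fun x => ∑' n, F n x) (fun x => x ^ j * log x / (1 + x ^ m)) (Ioc 0 1) := by
    intro x hx
    rcases hx.2.lt_or_eq with hx₁ | rfl
    · simp only [F, ← mul_assoc, tsum_mul_right, mul_div_right_comm]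
      rw [(hasSum_neg_one_pow_mul_pow hm j hx.1.le hx₁).tsum_eq]
    · simp [F]
  rw [integral_of_le zero_le_one, ← setIntegral_congr_fun measurableSet_Ioc hF_tsum,
    ← integral_tsum_of_summable_integral_norm hF_int hF_sum, ← tsum_neg]
  congr 1 with n
  rw [MeasureTheory.integral_const_mul, ← integral_of_le zero_le_one, integral_pow_mul_log]
  push_cast
  ring

lemma tsum_one_div_sq_three_mul_add_one_add_two :
    ∑' n : ℕ, 1 / ((3 * n + 1 : ℕ) : ℝ) ^ 2 + ∑' n : ℕ, 1 / ((3 * n + 2 : ℕ) : ℝ) ^ 2 =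
      4 * π ^ 2 / 27 := by
  have h := Nat.sumByResidueClasses hasSum_zeta_two.summable 3
  rw [hasSum_zeta_two.tsum_eq, show ∀ g : ZMod 3 → ℝ, ∑ j, g j = g 0 + g 1 + g 2 from
    Fin.sum_univ_three] at h
  -- both here and in `hasSum_zeta_two` the `0`-th term is the junk value `1 / 0 = 0`
  have h₀ : ∑' m : ℕ, 1 / ((3 * m : ℕ) : ℝ) ^ 2 = π ^ 2 / 54 := by
    simp_rw [Nat.cast_mul, mul_pow, ← one_div_mul_one_div, tsum_mul_left, hasSum_zeta_two.tsum_eq]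
    norm_num
    ring
  simp only [ZMod.val_zero, ZMod.val_one, show (2 : ZMod 3).val = 2 from rfl, zero_add, h₀] at h
  simp only [add_comm _ (3 * _)] at h
  linarith

lemma HasSum.neg_one_pow_mul {α : Type*} [Ring α] [TopologicalSpace α] [IsTopologicalAddGroup α]
    {f : ℕ → α} {e o : α} (he : HasSum (fun k => f (2 * k)) e)
    (ho : HasSum (fun k => f (2 * k + 1)) o) : HasSum (fun n => (-1) ^ n * f n) (e - o) := by
  rw [sub_eq_add_neg]
  exact HasSum.even_add_odd (f := fun n => (-1) ^ n * f n)
    (he.congr_fun fun k => by rw [pow_mul, neg_one_sq, one_pow, one_mul])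
    (ho.neg.congr_fun fun k => by rw [pow_succ, pow_mul, neg_one_sq, one_pow, one_mul, neg_one_mul])

lemma one_div_sq_two_mul (n : ℕ) : 1 / ((2 * n : ℕ) : ℝ) ^ 2 = 1 / (n : ℝ) ^ 2 / 4 := by
  push_cast
  ring

lemma tsum_neg_one_pow_div_sq_three_mul_add_one_add_two :
    ∑' n : ℕ, (-1) ^ n / ((3 * n + 1 : ℕ) : ℝ) ^ 2 +
        ∑' n : ℕ, (-1) ^ n / ((3 * n + 2 : ℕ) : ℝ) ^ 2 =
      3 / 2 * (∑' n : ℕ, 1 / ((3 * n + 1 : ℕ) : ℝ) ^ 2 -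
        ∑' n : ℕ, 1 / ((3 * n + 2 : ℕ) : ℝ) ^ 2) := by
  set a : ℕ → ℝ := fun n => 1 / ((3 * n + 1 : ℕ) : ℝ) ^ 2
  set b : ℕ → ℝ := fun n => 1 / ((3 * n + 2 : ℕ) : ℝ) ^ 2
  have ha : Summable a := summable_one_div_sq_comp fun m n h => by omega
  have hb : Summable b := summable_one_div_sq_comp fun m n h => by omega
  have ha_odd (k : ℕ) : a (2 * k + 1) = b k / 4 := by
    simp only [a, b, ← one_div_sq_two_mul]
    congr 3
    ring
  have hb_even (k : ℕ) : b (2 * k) = a k / 4 := by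
    simp only [a, b, ← one_div_sq_two_mul]
    congr 3
    ring
  have ha_even : Summable fun k => a (2 * k) := ha.comp_injective fun m n h => by omega
  have hb_odd : Summable fun k => b (2 * k + 1) := hb.comp_injective fun m n h => by omega
  have hA := ha_even.hasSum.even_add_odd ((hb.hasSum.div_const 4).congr_fun ha_odd)
  have hB := ((ha.hasSum.div_const 4).congr_fun hb_even).even_add_odd hb_odd.hasSum
  have hA' := ha_even.hasSum.neg_one_pow_mul ((hb.hasSum.div_const 4).congr_fun ha_odd)
  have hB' := ((ha.hasSum.div_const 4).congr_fun hb_even).neg_one_pow_mul hb_odd.hasSum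
  simp only [div_eq_mul_one_div ((-1 : ℝ) ^ _)]
  rw [hA'.tsum_eq, hB'.tsum_eq]
  linarith [ha.hasSum.unique hA, hb.hasSum.unique hB]

lemma trigamma_one_third : trigamma (1 / 3) = 9 * ∑' n : ℕ, 1 / ((3 * n + 1 : ℕ) : ℝ) ^ 2 := by
  rw [trigamma, ← tsum_mul_left]
  congr 1 with n
  push_cast
  field_simp
  ring

theorem stmt4 :
    ∫ x in (0:ℝ)..1, Real.log x / (x ^ 2 - x + 1) =
      2 * Real.pi ^ 2 / 9 - (1 / 3) * trigamma (1/3) := by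
  have hsplit : EqOn (fun x => log x / (x ^ 2 - x + 1))
      (fun x => x ^ 0 * log x / (1 + x ^ 3) + x ^ 1 * log x / (1 + x ^ 3)) (uIcc 0 1) := by
    intro x hx
    have : 0 ≤ x := by simpa using hx.1
    have : 0 < x ^ 2 - x + 1 := by nlinarith
    dsimp only
    rw [← add_div, div_eq_div_iff this.ne' (by positivity)]
    ring
  rw [integral_congr hsplit, integral_add (intervalIntegrable_pow_mul_log_div_one_add_pow 3 0)
    (intervalIntegrable_pow_mul_log_div_one_add_pow 3 1),
    integral_pow_mul_log_div_one_add_pow three_ne_zero,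
    integral_pow_mul_log_div_one_add_pow three_ne_zero, trigamma_one_third]
  simp only [add_zero, add_assoc, Nat.reduceAdd]
  linarith [tsum_neg_one_pow_div_sq_three_mul_add_one_add_two,
    tsum_one_div_sq_three_mul_add_one_add_two]
end

section
/- ∫₀¹ log²(x)/(1+x) dx = (3/2)ζ(3). -/
/-!
Expanding `1 / (1 + x) = ∑ (-x)ⁿ` and integrating termwise with
`∫₀¹ xⁿ log² x dx = 2 / (n + 1)³` (an explicit primitive, continuous at `0`) turns the integral
into `2 η(3)`; the termwise integration is legitimate because the integrals of the absolute
values, `2 / (n + 1)³`, are summable. Splitting into even and odd terms gives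
`η(p) = (1 - 2 / 2ᵖ) ζ(p)`, hence `2 η(3) = (3 / 2) ζ(3)`.
-/

open Real MeasureTheory Set Filter Topology

theorem tendsto_pow_mul_log_pow_nhdsGT_zero {m : ℕ} (hm : 0 < m) (k : ℕ) :
    Tendsto (fun x : ℝ => x ^ m * log x ^ k) (𝓝[>] 0) (𝓝 0) := by
  rcases Nat.eq_zero_or_pos k with rfl | hk
  · simpa [hm.ne'] using
      ((continuous_pow m).tendsto (0 : ℝ)).mono_left nhdsWithin_le_nhds
  have hr : (0 : ℝ) < m / k := by positivity
  have h := (tendsto_log_mul_rpow_nhdsGT_zero hr).pow k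
  rw [zero_pow hk.ne'] at h
  refine h.congr' (eventually_mem_nhdsWithin.mono fun x (hx : 0 < x) => ?_)
  rw [mul_pow, ← rpow_mul_natCast hx.le, div_mul_cancel₀ _ (by positivity), rpow_natCast,
    mul_comm]

noncomputable def powMulLogSqPrimitive (n : ℕ) (x : ℝ) : ℝ :=
  x ^ (n + 1) * log x ^ 2 / (n + 1) - 2 * (x ^ (n + 1) * log x) / (n + 1) ^ 2
    + 2 * x ^ (n + 1) / (n + 1) ^ 3

theorem hasDerivAt_powMulLogSqPrimitive (n : ℕ) {x : ℝ} (hx : x ≠ 0) :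
    HasDerivAt (powMulLogSqPrimitive n) (x ^ n * log x ^ 2) x := by
  have hpow := hasDerivAt_pow (n + 1) x
  have hlog := hasDerivAt_log hx
  refine HasDerivAt.congr_deriv (f := powMulLogSqPrimitive n)
    ((((hpow.mul (hlog.pow 2)).div_const _).sub (((hpow.mul hlog).const_mul 2).div_const _)).add
      ((hpow.const_mul 2).div_const _)) ?_
  simp only [Pi.pow_apply]
  field_simp
  push_cast
  ring

theorem continuousOn_powMulLogSqPrimitive (n : ℕ) :
    ContinuousOn (powMulLogSqPrimitive n) (Ici 0) := by
  intro x hx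
  rcases (mem_Ici.mp hx).eq_or_lt with rfl | hpos
  · have h := tendsto_pow_mul_log_pow_nhdsGT_zero n.succ_pos
    rw [← continuousWithinAt_Ioi_iff_Ici, ContinuousWithinAt]
    unfold powMulLogSqPrimitive
    simpa using (((h 2).div_const ((n : ℝ) + 1)).sub
      (((h 1).const_mul 2).div_const (((n : ℝ) + 1) ^ 2))).add
      (((h 0).const_mul 2).div_const (((n : ℝ) + 1) ^ 3))
  · exact (hasDerivAt_powMulLogSqPrimitive n hpos.ne').continuousAt.continuousWithinAt

theorem integrableOn_pow_mul_log_sq (n : ℕ) :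
    IntegrableOn (fun x : ℝ => x ^ n * log x ^ 2) (Ioc 0 1) :=
  intervalIntegral.integrableOn_deriv_of_nonneg
    ((continuousOn_powMulLogSqPrimitive n).mono Icc_subset_Ici_self)
    (fun x hx => hasDerivAt_powMulLogSqPrimitive n hx.1.ne')
    (fun x hx => by have := hx.1; positivity)

theorem integral_pow_mul_log_sq (n : ℕ) :
    ∫ x in (0 : ℝ)..1, x ^ n * log x ^ 2 = 2 / ((n : ℝ) + 1) ^ 3 := by
  rw [intervalIntegral.integral_eq_sub_of_hasDerivAt_of_le zero_le_one
    ((continuousOn_powMulLogSqPrimitive n).mono Icc_subset_Ici_self)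
    (fun x hx => hasDerivAt_powMulLogSqPrimitive n hx.1.ne')
    ((intervalIntegrable_iff_integrableOn_Ioc_of_le zero_le_one).2
      (integrableOn_pow_mul_log_sq n))]
  simp [powMulLogSqPrimitive]

theorem summable_one_div_nat_succ_pow {p : ℕ} (hp : 1 < p) :
    Summable fun k : ℕ => 1 / ((k : ℝ) + 1) ^ p := by
  simpa using (summable_nat_add_iff 1).mpr (Real.summable_one_div_nat_pow.mpr hp)

theorem tsum_neg_one_pow_div_nat_succ_pow {p : ℕ} (hp : 1 < p) :
    ∑' k : ℕ, (-1) ^ k / ((k : ℝ) + 1) ^ p =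
      (1 - 2 / 2 ^ p) * ∑' k : ℕ, 1 / ((k : ℝ) + 1) ^ p := by
  set a : ℕ → ℝ := fun k => 1 / ((k : ℝ) + 1) ^ p
  have ha := summable_one_div_nat_succ_pow hp
  have he : Summable fun k => a (2 * k) := ha.comp_injective (mul_right_injective₀ two_ne_zero)
  have ho : Summable fun k => a (2 * k + 1) :=
    ha.comp_injective ((add_left_injective 1).comp (mul_right_injective₀ two_ne_zero))
  have hT : ∑' k, a (2 * k + 1) = (∑' k, a k) / 2 ^ p := by
    rw [← tsum_div_const]
    congr! 2 with k
    simp only [a]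
    push_cast
    rw [show (2 * (k : ℝ) + 1 + 1) = 2 * (k + 1) by ring, mul_pow, div_div, mul_comm]
  set f : ℕ → ℝ := fun k => (-1) ^ k / ((k : ℝ) + 1) ^ p
  have hfe : (fun k => f (2 * k)) = fun k => a (2 * k) := by
    funext k
    simp [f, a, pow_mul]
  have hfo : (fun k => f (2 * k + 1)) = fun k => -a (2 * k + 1) := by
    funext k
    simp [f, a, pow_succ, pow_mul, neg_div]
  have hS : ∑' k, a k = ∑' k, a (2 * k) + ∑' k, a (2 * k + 1) := (tsum_even_add_odd he ho).symm
  rw [← tsum_even_add_odd (hfe ▸ he) (hfo ▸ ho.neg), hfe, hfo, tsum_neg]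
  linear_combination -hS - 2 * hT

theorem setIntegral_Ioo_pow_mul_log_sq (n : ℕ) :
    ∫ x in Ioo (0 : ℝ) 1, x ^ n * log x ^ 2 = 2 / ((n : ℝ) + 1) ^ 3 := by
  rw [← integral_Ioc_eq_integral_Ioo, ← intervalIntegral.integral_of_le zero_le_one,
    integral_pow_mul_log_sq]

theorem summable_setIntegral_Ioo_norm_neg_one_pow_mul_pow_mul_log_sq :
    Summable fun n : ℕ => ∫ x in Ioo (0 : ℝ) 1, ‖(-1) ^ n * (x ^ n * log x ^ 2)‖ := by
  have hnorm (n : ℕ) : ∫ x in Ioo (0 : ℝ) 1, ‖(-1) ^ n * (x ^ n * log x ^ 2)‖ =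
      2 * (1 / ((n : ℝ) + 1) ^ 3) := by
    rw [mul_one_div, ← setIntegral_Ioo_pow_mul_log_sq]
    refine setIntegral_congr_fun measurableSet_Ioo fun x hx => ?_
    simp [abs_of_pos hx.1]
  simpa only [hnorm] using (summable_one_div_nat_succ_pow (by norm_num)).mul_left 2

theorem log_sq_div_one_add_eq_tsum {x : ℝ} (hx : x ∈ Ioo (0 : ℝ) 1) :
    log x ^ 2 / (1 + x) = ∑' n : ℕ, (-1) ^ n * (x ^ n * log x ^ 2) := by
  have hgeom := tsum_geometric_of_norm_lt_one (ξ := -x) (by simpa [abs_of_pos hx.1] using hx.2)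
  simp_rw [← mul_assoc, ← mul_pow, neg_one_mul, tsum_mul_right, hgeom, sub_neg_eq_add,
    div_eq_inv_mul]

theorem stmt12 :
    ∫ x in (0:ℝ)..1, Real.log x ^ 2 / (1 + x) =
      (3 / 2) * ∑' k : ℕ, 1 / ((k : ℝ) + 1) ^ 3 := by
  have hint (n : ℕ) : IntegrableOn (fun x : ℝ => (-1) ^ n * (x ^ n * log x ^ 2)) (Ioo 0 1) :=
    ((integrableOn_pow_mul_log_sq n).mono_set Ioo_subset_Ioc_self).const_mul _
  have hterm (n : ℕ) : ∫ x in Ioo (0 : ℝ) 1, (-1) ^ n * (x ^ n * log x ^ 2) =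
      2 * ((-1) ^ n / ((n : ℝ) + 1) ^ 3) := by
    rw [integral_const_mul, setIntegral_Ioo_pow_mul_log_sq]
    ring
  rw [intervalIntegral.integral_of_le zero_le_one, integral_Ioc_eq_integral_Ioo,
    setIntegral_congr_fun measurableSet_Ioo fun x => log_sq_div_one_add_eq_tsum,
    ← integral_tsum_of_summable_integral_norm hint
      summable_setIntegral_Ioo_norm_neg_one_pow_mul_pow_mul_log_sq]
  simp only [hterm]
  rw [tsum_mul_left, tsum_neg_one_pow_div_nat_succ_pow (by norm_num)]
  ring
end
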